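/- Let h > 0, let v = (r, c, d) ∈ ℝ³ with r ≠ 0, and let w ∈ ℝ³ be linearly independent from v. If the numerical wall W_w(v) is a vertical ray, i.e., W_w(v) = {(α, β₀) : α > 0} for some β₀ ∈ ℝ, then β₀ = c/(h·r). In particular, for fixed v with r ≠ 0 there is a unique vertical numerical wall, defined by the equation β = c/(h·r). -/

import Mathlib

/-!
Dividing the wall equation by `α`, it reads `α²·(h/2)·(r C − R c) + b(β) = 0` with `b`
independent of `α`. A vertical wall at `β₀` contains `(α, β₀)` for every `α > 0`, so both
`r C = R c` and `b(β₀) = 0`. Once this minor vanishes, `r·b(β) = (c − β h r)·(r D − R d)`,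
and linear independence with `r ≠ 0` forces `r D ≠ R d`; hence `c = β₀ h r`.
-/

namespace BridgelandNotes

/-- The central charge `Z_{α,β}(v)` for `v = (r, c, d)`, where `h` plays the role of
`H²`:  `Z_{α,β}(v) = (−d + β·c + ((α² − β²)/2)·h·r) + i·α·(c − β·h·r)`. -/
noncomputable def centralCharge (h : ℝ) (v : ℝ × ℝ × ℝ) (α β : ℝ) : ℂ :=
  ⟨-v.2.2 + β * v.2.1 + ((α ^ 2 - β ^ 2) / 2) * h * v.1,
    α * (v.2.1 - β * h * v.1)⟩

/-- The numerical wall `W_w(v)` in the `(α, β)`-plane: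
`{(α, β) : α > 0 and Re Z_{α,β}(v)·Im Z_{α,β}(w) = Re Z_{α,β}(w)·Im Z_{α,β}(v)}`. -/
noncomputable def numericalWall (h : ℝ) (v w : ℝ × ℝ × ℝ) : Set (ℝ × ℝ) :=
  {p : ℝ × ℝ | 0 < p.1 ∧
    (centralCharge h v p.1 p.2).re * (centralCharge h w p.1 p.2).im =
      (centralCharge h w p.1 p.2).re * (centralCharge h v p.1 p.2).im}

/-- The discriminant `Δ̄(v) = c² − 2·h·r·d` for `v = (r, c, d)`. -/
def disc (h : ℝ) (v : ℝ × ℝ × ℝ) : ℝ := v.2.1 ^ 2 - 2 * h * v.1 * v.2.2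

/- The degree-one and degree-two parts of the twisted Chern character `e^{-βH}·v`, in terms of
which `Z_{α,β}(v) = −twistedCh2 + (α²/2)·h·r + i·α·twistedCh1`. -/
def twistedCh1 (h β : ℝ) (v : ℝ × ℝ × ℝ) : ℝ := v.2.1 - β * h * v.1

noncomputable def twistedCh2 (h β : ℝ) (v : ℝ × ℝ × ℝ) : ℝ :=
  v.2.2 - β * v.2.1 + β ^ 2 / 2 * h * v.1

section

variable (h : ℝ) (v w : ℝ × ℝ × ℝ)

theorem centralCharge_re_mul_im_sub (α β : ℝ) :
    (centralCharge h v α β).re * (centralCharge h w α β).im -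
        (centralCharge h w α β).re * (centralCharge h v α β).im =
      α * (α ^ 2 * (h / 2 * (v.1 * w.2.1 - w.1 * v.2.1)) +
        (twistedCh2 h β w * twistedCh1 h β v - twistedCh2 h β v * twistedCh1 h β w)) := by
  simp only [centralCharge, twistedCh1, twistedCh2]
  ring

theorem mem_numericalWall_iff (p : ℝ × ℝ) :
    p ∈ numericalWall h v w ↔ 0 < p.1 ∧
      p.1 ^ 2 * (h / 2 * (v.1 * w.2.1 - w.1 * v.2.1)) +
        (twistedCh2 h p.2 w * twistedCh1 h p.2 v - twistedCh2 h p.2 v * twistedCh1 h p.2 w) =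
          0 := by
  refine and_congr_right fun hα => ?_
  rw [← sub_eq_zero, centralCharge_re_mul_im_sub, mul_eq_zero, or_iff_right hα.ne']

theorem twistedCh_cross_of_mul_eq (β : ℝ) (hc : v.1 * w.2.1 = w.1 * v.2.1) :
    v.1 * (twistedCh2 h β w * twistedCh1 h β v - twistedCh2 h β v * twistedCh1 h β w) =
      twistedCh1 h β v * (v.1 * w.2.2 - w.1 * v.2.2) := by
  simp only [twistedCh1, twistedCh2]
  linear_combination (v.1 * β ^ 2 * h / 2 - v.2.2) * hc

end

theorem mul_sub_mul_ne_zero_of_linearIndependent {v w : ℝ × ℝ × ℝ}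
    (hvw : LinearIndependent ℝ ![v, w]) (hr : v.1 ≠ 0) (hc : v.1 * w.2.1 = w.1 * v.2.1) :
    v.1 * w.2.2 - w.1 * v.2.2 ≠ 0 := by
  intro hd
  have hcomb : w.1 • v + (-v.1) • w = 0 := by
    refine Prod.ext ?_ (Prod.ext ?_ ?_) <;>
      simp only [Prod.fst_add, Prod.snd_add, Prod.smul_fst, Prod.smul_snd, smul_eq_mul,
        Prod.fst_zero, Prod.snd_zero]
    · ring
    · linear_combination -hc
    · linear_combination -hd
  exact hr (neg_eq_zero.mp (LinearIndependent.pair_iff.mp hvw _ _ hcomb).2)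

/-- If `r ≠ 0` and the numerical wall `W_w(v)` is a vertical ray `{(α, β₀) : α > 0}`,
then `β₀ = c/(h·r)`: there is a unique vertical numerical wall, given by the equation
`β = c/(h·r)`. -/
theorem vertical_wall_unique (h : ℝ) (hh : 0 < h)
    (v w : ℝ × ℝ × ℝ) (hr : v.1 ≠ 0) (hvw : LinearIndependent ℝ ![v, w]) (β₀ : ℝ)
    (hW : numericalWall h v w = {p : ℝ × ℝ | 0 < p.1 ∧ p.2 = β₀}) :
    β₀ = v.2.1 / (h * v.1) := by
  have on_wall (α : ℝ) (hα : 0 < α) := ((mem_numericalWall_iff h v w (α, β₀)).1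
    (hW ▸ ⟨hα, rfl⟩)).2
  have h₁ := on_wall 1 one_pos
  have h₂ := on_wall 2 two_pos
  have hc : v.1 * w.2.1 = w.1 * v.2.1 := by
    have : 3 * h * (v.1 * w.2.1 - w.1 * v.2.1) = 0 := by linear_combination 2 * (h₂ - h₁)
    simpa [sub_eq_zero, hh.ne'] using this
  have hch1 : twistedCh1 h β₀ v = 0 := by
    have := twistedCh_cross_of_mul_eq h v w β₀ hc
    rw [show twistedCh2 h β₀ w * _ - _ = 0 by linear_combination h₁ - h / 2 * hc,
      mul_zero] at this
    exact (mul_eq_zero.mp this.symm).resolve_right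
      (mul_sub_mul_ne_zero_of_linearIndependent hvw hr hc)
  rw [eq_div_iff (mul_ne_zero hh.ne' hr)]
  unfold twistedCh1 at hch1
  linarith

end BridgelandNotes
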